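/- Let n ≥ 3 and let λ₁, …, λₙ be real numbers with Σᵢ λᵢ = 0, Σᵢ λᵢ² = 1, and Σᵢ λᵢ³ = -(n-2)/√(n(n-1)). Then, after a permutation, λᵢ = 1/√(n(n-1)) for n-1 indices and λₙ = -√((n-1)/n). -/

import Mathlib

/-! Cauchy–Schwarz applied to the other `n - 1` coordinates, whose sum is `-λᵢ`, gives
`n λᵢ² ≤ n - 1`, so every `λᵢ ≥ b := -√((n-1)/n)`. With `a := 1/√(n(n-1))` the cubic
`(t - a)² (t - b)` is nonnegative on `[b, ∞)`, and by the three moment conditions its sum over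
the `λᵢ` vanishes. Hence every `λᵢ` is `a` or `b`, and `∑ λᵢ = 0` forces `b` to occur exactly
once. -/

open Finset

theorem card_mul_sq_le_of_sum_eq_zero {ι : Type*} [Fintype ι] {x : ι → ℝ}
    (hx : ∑ j, x j = 0) (i : ι) :
    (Fintype.card ι : ℝ) * x i ^ 2 ≤ (Fintype.card ι - 1) * ∑ j, x j ^ 2 := by
  classical
  have hcs := sq_sum_le_card_mul_sum_sq (s := univ.erase i) (f := x)
  rw [sum_erase_eq_sub (mem_univ i), sum_erase_eq_sub (mem_univ i), hx,
    card_erase_of_mem (mem_univ i), card_univ,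
    Nat.cast_pred (Fintype.card_pos_iff.2 ⟨i⟩)] at hcs
  linear_combination hcs

theorem neg_sqrt_le_of_sum_eq_zero_of_sum_sq_eq_one {ι : Type*} [Fintype ι] {x : ι → ℝ}
    (h1 : ∑ j, x j = 0) (h2 : ∑ j, x j ^ 2 = 1) (i : ι) :
    -√((Fintype.card ι - 1) / Fintype.card ι) ≤ x i := by
  have h := card_mul_sq_le_of_sum_eq_zero h1 i
  have hcard : (0 : ℝ) < Fintype.card ι := Nat.cast_pos.2 (Fintype.card_pos_iff.2 ⟨i⟩)
  rw [h2, mul_one, ← le_div_iff₀' hcard] at h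
  linarith [neg_abs_le (x i), Real.abs_le_sqrt h]

theorem sum_sq_sub_mul_sub {ι : Type*} [Fintype ι] (x : ι → ℝ) (a b : ℝ) :
    ∑ i, (x i - a) ^ 2 * (x i - b) =
      ∑ i, x i ^ 3 - (2 * a + b) * ∑ i, x i ^ 2 + (a ^ 2 + 2 * a * b) * ∑ i, x i
        - Fintype.card ι * a ^ 2 * b := by
  have hexpand : ∀ i, (x i - a) ^ 2 * (x i - b) =
      x i ^ 3 - (2 * a + b) * x i ^ 2 + (a ^ 2 + 2 * a * b) * x i - a ^ 2 * b := by
    intro i; ring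
  simp only [hexpand, sum_sub_distrib, sum_add_distrib, ← mul_sum, sum_const, card_univ,
    nsmul_eq_mul]
  ring

theorem eq_or_eq_of_sum_sq_sub_mul_sub_eq_zero {ι : Type*} [Fintype ι] {x : ι → ℝ} {a b : ℝ}
    (hb : ∀ i, b ≤ x i) (h : ∑ i, (x i - a) ^ 2 * (x i - b) = 0) (i : ι) :
    x i = a ∨ x i = b := by
  have hnonneg : ∀ i ∈ univ, 0 ≤ (x i - a) ^ 2 * (x i - b) :=
    fun i _ ↦ mul_nonneg (sq_nonneg _) (sub_nonneg.2 (hb i))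
  have hi := (sum_eq_zero_iff_of_nonneg hnonneg).1 h i (mem_univ i)
  simpa [sub_eq_zero] using hi

theorem exists_eq_and_forall_ne_of_sum_eq_zero {ι : Type*} [Fintype ι] [Nonempty ι]
    {x : ι → ℝ} {a : ℝ} (ha : a ≠ 0)
    (hx : ∀ i, x i = a ∨ x i = -((Fintype.card ι - 1) * a)) (hsum : ∑ i, x i = 0) :
    ∃ j, x j = -((Fintype.card ι - 1) * a) ∧ ∀ i ≠ j, x i = a := by
  classical
  set c : ℝ := (Fintype.card ι : ℝ)
  have hca : c * a ≠ 0 := mul_ne_zero (by positivity) ha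
  have hdev : ∀ i, x i - a = if x i = a then 0 else -(c * a) := by
    intro i
    split_ifs with h
    · rw [h, sub_self]
    · rw [(hx i).resolve_left h]; ring
  have hcard : #{i | ¬x i = a} = 1 := by
    have h : ∑ i, (x i - a) = -(c * a) := by
      rw [sum_sub_distrib, hsum, sum_const, card_univ, nsmul_eq_mul]; ring
    rw [sum_congr rfl fun i _ ↦ hdev i, sum_ite, sum_const_zero, sum_const, nsmul_eq_mul,
      zero_add, mul_neg, neg_inj, mul_eq_right₀ hca] at h
    exact_mod_cast h
  obtain ⟨j, hj⟩ := card_eq_one.1 hcard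
  have hmem : ∀ i, x i ≠ a ↔ i = j := fun i ↦ by
    simpa using congrArg (i ∈ ·) hj
  refine ⟨j, ((hx j).resolve_left ((hmem j).2 rfl)), fun i hij ↦ ?_⟩
  by_contra h
  exact hij ((hmem i).1 h)

theorem Fin.exists_perm_eq_ite_of_forall_ne {α : Type*} {n : ℕ} {f : Fin n → α} {j : Fin n}
    {a : α} (hf : ∀ i ≠ j, f i = a) :
    ∃ σ : Equiv.Perm (Fin n), ∀ i, f (σ i) = if (i : ℕ) < n - 1 then a else f j := by
  let last : Fin n := ⟨n - 1, by have := j.isLt; omega⟩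
  refine ⟨Equiv.swap j last, fun i ↦ ?_⟩
  split_ifs with hi
  · refine hf _ fun h ↦ ?_
    rw [Equiv.swap_apply_eq_iff, Equiv.swap_apply_left] at h
    exact hi.ne (congrArg Fin.val h)
  · rw [show i = last from Fin.ext (by simp [last]; omega), Equiv.swap_apply_right]

theorem Real.sqrt_sub_one_div_self {N : ℝ} (hN : 1 < N) :
    √((N - 1) / N) = (N - 1) / √(N * (N - 1)) := by
  have hN0 : 0 < N := by linarith
  rw [eq_div_iff (Real.sqrt_pos.2 (by nlinarith)).ne', ← Real.sqrt_mul (by positivity),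
    show (N - 1) / N * (N * (N - 1)) = (N - 1) ^ 2 by field_simp,
    Real.sqrt_sq (by linarith)]

theorem cubic_power_sum_rigidity (n : ℕ) (hn : 3 ≤ n) (lam : Fin n → ℝ)
    (h1 : ∑ i, lam i = 0) (h2 : ∑ i, (lam i) ^ 2 = 1)
    (h3 : ∑ i, (lam i) ^ 3 = -((n : ℝ) - 2) / Real.sqrt ((n : ℝ) * ((n : ℝ) - 1))) :
    ∃ σ : Equiv.Perm (Fin n), ∀ i : Fin n,
      lam (σ i) = if (i : ℕ) < n - 1 then 1 / Real.sqrt ((n : ℝ) * ((n : ℝ) - 1))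
        else -Real.sqrt (((n : ℝ) - 1) / (n : ℝ)) := by
  have hN : (1 : ℝ) < n := by exact_mod_cast (by omega : 1 < n)
  have : NeZero n := ⟨by omega⟩
  set a := 1 / √((n : ℝ) * (n - 1)) with ha_def
  have ha : 0 < a := one_div_pos.2 (Real.sqrt_pos.2 (by nlinarith))
  have hna : (n : ℝ) * (n - 1) * a ^ 2 = 1 := by
    rw [ha_def, div_pow, Real.sq_sqrt (by nlinarith)]
    field_simp [show (n : ℝ) - 1 ≠ 0 by linarith]
  have hsqrt : √(((n : ℝ) - 1) / n) = (n - 1) * a := by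
    rw [Real.sqrt_sub_one_div_self hN, ha_def, mul_one_div]
  have hlow : ∀ i, -((n - 1) * a) ≤ lam i := fun i ↦ by
    simpa only [Fintype.card_fin, hsqrt] using
      neg_sqrt_le_of_sum_eq_zero_of_sum_sq_eq_one h1 h2 i
  have hzero : ∑ i, (lam i - a) ^ 2 * (lam i - -((n - 1) * a)) = 0 := by
    rw [sum_sq_sub_mul_sub, h1, h2, h3, Fintype.card_fin, div_eq_mul_one_div]
    linear_combination a * hna
  have htwo : ∀ i, lam i = a ∨ lam i = -((Fintype.card (Fin n) - 1) * a) := by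
    simpa only [Fintype.card_fin] using eq_or_eq_of_sum_sq_sub_mul_sub_eq_zero hlow hzero
  obtain ⟨j, hj, hne⟩ := exists_eq_and_forall_ne_of_sum_eq_zero ha.ne' htwo h1
  obtain ⟨σ, hσ⟩ := Fin.exists_perm_eq_ite_of_forall_ne hne
  refine ⟨σ, fun i ↦ ?_⟩
  rw [hσ, hj, Fintype.card_fin, hsqrt]
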